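/- arXiv:2008.01006 — 3 statements merged into one kernel-verified Lean document; each statement's English description precedes it below -/
import Mathlib

section
/- Let P and Q be probability measures on a measurable space (Θ, F) with Q absolutely continuous with respect to P, and let h be a real-valued measurable function with exp(h) integrable with respect to P. Then E_Q[h] − KL(Q‖P) ≤ log E_P[exp h]. -/
open MeasureTheory Real

/-! Tilt `P` into the Gibbs measure `P_h = P.tilted h`, with density `exp h / E_P[exp h]`.
Since `log (dQ/dP_h) = log (dQ/dP) - h + log E_P[exp h]`, Gibbs' inequality `KL(Q‖P_h) ≥ 0`
is exactly the claimed bound. -/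

theorem integral_llr_nonneg {α : Type*} [MeasurableSpace α] {μ ν : Measure α}
    [IsProbabilityMeasure μ] [IsProbabilityMeasure ν]
    (hμν : μ ≪ ν) (h_int : Integrable (llr μ ν) μ) :
    0 ≤ ∫ x, llr μ ν x ∂μ := by
  simpa using InformationTheory.integral_llr_add_sub_measure_univ_nonneg hμν h_int

theorem duality_upper_bound_general {Θ : Type*} [MeasurableSpace Θ]
    (P Q : Measure Θ) [IsProbabilityMeasure P] [IsProbabilityMeasure Q]
    (hQP : Q ≪ P) (h : Θ → ℝ)
    (hexp : Integrable (fun θ => Real.exp (h θ)) P)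
    (hhQ : Integrable h Q)
    (hKL : Integrable (fun θ => Real.log (Q.rnDeriv P θ).toReal) Q) :
    (∫ θ, h θ ∂Q) - ∫ θ, Real.log (Q.rnDeriv P θ).toReal ∂Q
      ≤ Real.log (∫ θ, Real.exp (h θ) ∂P) := by
  have : IsProbabilityMeasure (P.tilted h) := isProbabilityMeasure_tilted hexp
  have gibbs := integral_llr_nonneg (hQP.trans (absolutelyContinuous_tilted hexp))
    (integrable_llr_tilted_right hQP hhQ hKL hexp)
  rw [integral_llr_tilted_right hQP hhQ hexp hKL] at gibbs
  simp only [llr_def] at gibbs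
  linarith

/-- Donsker–Varadhan upper bound: for probability measures `Q ≪ P` and a measurable `h`
with `exp h ∈ L¹(P)`, we have `E_Q[h] − KL(Q‖P) ≤ log E_P[exp h]`. -/
theorem duality_upper_bound {Θ : Type*} [MeasurableSpace Θ]
    (P Q : Measure Θ) [IsProbabilityMeasure P] [IsProbabilityMeasure Q]
    (hQP : Q ≪ P) (h : Θ → ℝ) (hm : Measurable h)
    (hexp : Integrable (fun θ => Real.exp (h θ)) P)
    (hhQ : Integrable h Q)
    (hKL : Integrable (fun θ => Real.log (Q.rnDeriv P θ).toReal) Q) :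
    (∫ θ, h θ ∂Q) - ∫ θ, Real.log (Q.rnDeriv P θ).toReal ∂Q
      ≤ Real.log (∫ θ, Real.exp (h θ) ∂P) :=
  duality_upper_bound_general P Q hQP h hexp hhQ hKL
end

section
/- Let P be a probability measure on (Θ, F) and h a measurable function with exp(h) integrable with respect to P. Define Q by dQ/dP = exp(h)/E_P[exp h] (the Gibbs/tilted measure). Then Q is a probability measure absolutely continuous with respect to P, and E_Q[h] − KL(Q‖P) = log E_P[exp h], so the supremum in the Donsker–Varadhan duality formula is attained at Q. -/
open MeasureTheory Real

/-- The Gibbs/tilted measure `dQ/dP = exp h / E_P[exp h]` is a probability measure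
absolutely continuous w.r.t. `P`, and it attains the supremum in the Donsker–Varadhan
duality formula: `E_Q[h] − KL(Q‖P) = log E_P[exp h]`. -/
theorem gibbs_measure_attains_supremum {Θ : Type*} [MeasurableSpace Θ]
    (P : Measure Θ) [IsProbabilityMeasure P] (h : Θ → ℝ) (hm : Measurable h)
    (hexp : Integrable (fun θ => Real.exp (h θ)) P)
    (hhexp : Integrable (fun θ => h θ * Real.exp (h θ)) P)
    (Z : ℝ) (hZ : Z = ∫ θ, Real.exp (h θ) ∂P)
    (Q : Measure Θ)
    (hQ : Q = P.withDensity (fun θ => ENNReal.ofReal (Real.exp (h θ) / Z))) :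
    IsProbabilityMeasure Q ∧ Q ≪ P ∧
      (∫ θ, h θ ∂Q) - (∫ θ, Real.log (Real.exp (h θ) / Z) ∂Q) = Real.log Z := by
  have hQt : Q = P.tilted h := by rw [hQ, hZ]; rfl
  have hZpos : 0 < Z := hZ ▸ integral_exp_pos hexp
  have hprob : IsProbabilityMeasure Q := hQt ▸ isProbabilityMeasure_tilted hexp
  refine ⟨hprob, hQ ▸ withDensity_absolutelyContinuous P _, ?_⟩
  have hintQ : Integrable h Q := by
    rw [hQ]
    rw [integrable_withDensity_iff ((hm.exp).div_const Z).ennreal_ofReal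
      (Filter.Eventually.of_forall fun x => ENNReal.ofReal_lt_top)]
    refine (Integrable.div_const hhexp Z).congr (Filter.Eventually.of_forall fun x => ?_)
    show h x * rexp (h x) / Z = h x * (ENNReal.ofReal (rexp (h x) / Z)).toReal
    rw [ENNReal.toReal_ofReal (div_nonneg (Real.exp_pos _).le hZpos.le), mul_div_assoc]
  have hlog : ∀ θ, Real.log (Real.exp (h θ) / Z) = h θ - Real.log Z := fun θ => by
    rw [Real.log_div (Real.exp_ne_zero _) hZpos.ne', Real.log_exp]
  have : (∫ θ, Real.log (Real.exp (h θ) / Z) ∂Q) = (∫ θ, h θ ∂Q) - Real.log Z := by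
    simp_rw [hlog]
    rw [integral_sub hintQ (integrable_const _), integral_const]
    simp
  rw [this]
  ring
end

section
/- Let P be a probability measure and h measurable with exp(h) ∈ L¹(P). Then log E_P[exp h] = sup over probability measures Q ≪ P of ( E_Q[h] − KL(Q‖P) ). -/
/-!
Tilting `P` by `h` gives the Gibbs measure `P_h` with density `exp h / E_P[exp h]`, and for every
admissible `Q` one has `E_Q[h] - KL(Q‖P) = log E_P[exp h] - KL(Q‖P_h)`; Gibbs' inequality
`KL(Q‖P_h) ≥ 0` gives the upper bound. The supremum is approached by the Gibbs measures of `P`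
restricted to `{|h| ≤ n}`, each of which attains `log ∫_{|h| ≤ n} exp h dP`, and these values
converge to `log E_P[exp h]` by monotone convergence.
-/

open MeasureTheory Real Filter Set InformationTheory
open scoped Topology

namespace MeasureTheory

variable {α : Type*} [MeasurableSpace α] {μ ν : Measure α} {f : α → ℝ}

lemma integral_sub_integral_llr_le_log_integral_exp [IsProbabilityMeasure μ] [SigmaFinite ν]
    (hμν : μ ≪ ν) (hfμ : Integrable f μ) (hfν : Integrable (fun x ↦ exp (f x)) ν)
    (h_int : Integrable (llr μ ν) μ) :
    ∫ x, f x ∂μ - ∫ x, llr μ ν x ∂μ ≤ log (∫ x, exp (f x) ∂ν) := by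
  have : NeZero ν := ⟨fun h0 ↦ IsProbabilityMeasure.ne_zero μ
    (Measure.absolutelyContinuous_zero_iff.mp (h0 ▸ hμν))⟩
  have := isProbabilityMeasure_tilted hfν
  have gibbs := integral_llr_add_sub_measure_univ_nonneg
    (hμν.trans (absolutelyContinuous_tilted hfν)) (integrable_llr_tilted_right hμν hfμ h_int hfν)
  rw [integral_llr_tilted_right hμν hfμ hfν h_int] at gibbs
  simp only [probReal_univ] at gibbs
  linarith

lemma llr_restrict_tilted [SigmaFinite ν] {s : Set α} (hs : MeasurableSet s)
    (hf : IntegrableOn (fun x ↦ exp (f x)) s ν) (hfm : AEMeasurable f ν) :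
    llr ((ν.restrict s).tilted f) ν
      =ᵐ[ν.restrict s] fun x ↦ f x - log (∫ x in s, exp (f x) ∂ν) := by
  have llr_restrict : llr (ν.restrict s) ν =ᵐ[ν.restrict s] 0 := by
    filter_upwards [ae_restrict_of_ae (Measure.rnDeriv_restrict_self ν hs), ae_restrict_mem hs]
      with x hx hxs
    simp [llr, hx, hxs]
  filter_upwards [llr_tilted_left Measure.restrict_le_self.absolutelyContinuous hf hfm,
    llr_restrict] with x hx h0
  simp [hx, h0]

lemma exists_integral_sub_integral_llr_eq_log_setIntegral_exp [IsFiniteMeasure ν] {s : Set α}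
    {C : ℝ} (hs : MeasurableSet s) (hνs : ν s ≠ 0) (hf : Measurable f)
    (hfC : ∀ x ∈ s, |f x| ≤ C) :
    ∃ μ : Measure α, IsProbabilityMeasure μ ∧ μ ≪ ν ∧ Integrable f μ ∧
      Integrable (llr μ ν) μ ∧
      log (∫ x in s, exp (f x) ∂ν) = ∫ x, f x ∂μ - ∫ x, llr μ ν x ∂μ := by
  have : NeZero (ν.restrict s) := ⟨by simpa using hνs⟩
  have hf_bdd : ∀ᵐ x ∂ν.restrict s, ‖f x‖ ≤ C := by
    filter_upwards [ae_restrict_mem hs] with x hx using hfC x hx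
  have hexp : IntegrableOn (fun x ↦ exp (f x)) s ν :=
    Integrable.of_bound hf.exp.aestronglyMeasurable (exp C) <| by
      filter_upwards [hf_bdd] with x hx
      rw [norm_of_nonneg (exp_pos _).le, exp_le_exp]
      exact (le_abs_self _).trans hx
  set μ := (ν.restrict s).tilted f
  have hμ_prob : IsProbabilityMeasure μ := isProbabilityMeasure_tilted hexp
  have hμs : μ ≪ ν.restrict s := tilted_absolutelyContinuous _ _
  have hfμ : Integrable f μ := Integrable.of_bound hf.aestronglyMeasurable C (hμs.ae_le hf_bdd)
  have hllr : llr μ ν =ᵐ[μ] fun x ↦ f x - log (∫ x in s, exp (f x) ∂ν) :=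
    hμs.ae_le (llr_restrict_tilted hs hexp hf.aemeasurable)
  refine ⟨μ, hμ_prob, hμs.trans Measure.restrict_le_self.absolutelyContinuous, hfμ,
    (hfμ.sub (integrable_const _)).congr hllr.symm, ?_⟩
  rw [integral_congr_ae hllr, integral_sub hfμ (integrable_const _)]
  simp

end MeasureTheory

/-- Donsker–Varadhan duality formula: `log E_P[exp h]` is the least upper bound of
`E_Q[h] − KL(Q‖P)` over probability measures `Q ≪ P` for which both quantities are
well-defined. -/
theorem duality_formula_isLUB {Θ : Type*} [MeasurableSpace Θ]
    (P : Measure Θ) [IsProbabilityMeasure P] (h : Θ → ℝ) (hm : Measurable h)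
    (hexp : Integrable (fun θ => Real.exp (h θ)) P) :
    IsLUB {x : ℝ | ∃ Q : Measure Θ, IsProbabilityMeasure Q ∧ Q ≪ P ∧
        Integrable h Q ∧
        Integrable (fun θ => Real.log (Q.rnDeriv P θ).toReal) Q ∧
        x = (∫ θ, h θ ∂Q) - ∫ θ, Real.log (Q.rnDeriv P θ).toReal ∂Q}
      (Real.log (∫ θ, Real.exp (h θ) ∂P)) := by
  refine isLUB_of_mem_closure ?_ ?_
  · rintro x ⟨Q, _, hQP, hhQ, hllr, rfl⟩
    exact integral_sub_integral_llr_le_log_integral_exp hQP hhQ hexp hllr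
  let s : ℕ → Set Θ := fun n ↦ {θ | |h θ| ≤ n}
  have hs : ∀ n, MeasurableSet (s n) := fun n ↦ measurableSet_le hm.abs measurable_const
  have hs_mono : Monotone s := fun m n hmn θ (hθ : |h θ| ≤ m) ↦ hθ.trans (Nat.cast_le.mpr hmn)
  have hs_univ : ⋃ n, s n = univ := iUnion_eq_univ_iff.mpr fun θ ↦ exists_nat_ge |h θ|
  have hZ : Tendsto (fun n ↦ ∫ θ in s n, exp (h θ) ∂P) atTop (𝓝 (∫ θ, exp (h θ) ∂P)) := by
    simpa [hs_univ] using tendsto_setIntegral_of_monotone hs hs_mono hexp.integrableOn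
  have hZ_pos := integral_exp_pos hexp
  refine mem_closure_of_tendsto ((continuousAt_log hZ_pos.ne').tendsto.comp hZ) ?_
  filter_upwards [hZ.eventually_ne hZ_pos.ne'] with n hn
  exact exists_integral_sub_integral_llr_eq_log_setIntegral_exp (hs n)
    (fun h0 ↦ hn (setIntegral_measure_zero _ h0)) hm fun θ hθ ↦ hθ
end
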